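/- arXiv:1503.01245 — 2 statements merged into one kernel-verified Lean document; each statement's English description precedes it below -/
import Mathlib

section
/- Let u, φ, g, c be as above with φ∞ < 1/c, and define v(x) = u(g⁻¹(x)) and ψ(x) = x·v(x). Then v is continuous and non-increasing, ψ is increasing, and lim_{x→∞} ψ(x) = φ∞/(1 - c·φ∞). -/
/-!
Substituting `x = g (g⁻¹ x) = g⁻¹ x / (1 - c φ (g⁻¹ x))` gives
`ψ x = x u (g⁻¹ x) = ρ (φ (g⁻¹ x))` with `ρ s = s / (1 - c s)`. Since `φ ≤ φ∞ < 1/c`, the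
map `g` is increasing, so `g⁻¹` is a strictly increasing bijection of `[0, ∞)`; being monotone
onto an interval it is continuous, and it tends to infinity. So `v = u ∘ g⁻¹` is continuous and
non-increasing, and `ψ = ρ ∘ φ ∘ g⁻¹` is increasing with limit `ρ φ∞`, as `ρ` is increasing on
`{s | c s < 1}` and continuous at `φ∞`.
-/

open Set Filter Topology

theorem MonotoneOn.le_of_tendsto_Ici {α β : Type*} [TopologicalSpace α] [Preorder α]
    [OrderClosedTopology α] [Preorder β] [IsDirectedOrder β] {f : β → α} {a : β} {L : α}
    (hf : MonotoneOn f (Ici a)) (hL : Tendsto f atTop (𝓝 L)) {x : β} (hx : a ≤ x) : f x ≤ L :=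
  have : Nonempty β := ⟨x⟩
  ge_of_tendsto hL <| (eventually_ge_atTop x).mono fun _ hy => hf hx (hx.trans hy) hy

theorem Set.RightInvOn.strictMonoOn_of_monotoneOn {α β : Type*} [LinearOrder α] [LinearOrder β]
    {f : α → β} {g : β → α} {s : Set α} {t : Set β} (hgf : RightInvOn g f t)
    (hf : MonotoneOn f s) (hg : MapsTo g t s) : StrictMonoOn g t := by
  intro x hx y hy hxy
  by_contra! hle
  have := hf (hg hy) (hg hx) hle
  rw [hgf hx, hgf hy] at this
  exact this.not_gt hxy

section ImageIci

variable {α β : Type*} [LinearOrder α] [LinearOrder β] {f : α → β} {a : α} {b : β}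

theorem MonotoneOn.tendsto_atTop_of_image_Ici (hf : MonotoneOn f (Ici a))
    (himg : f '' Ici a = Ici b) : Tendsto f atTop atTop := by
  refine tendsto_atTop.2 fun y => ?_
  obtain ⟨x, hx, hxy⟩ : max y b ∈ f '' Ici a := himg ▸ le_max_right y b
  filter_upwards [eventually_ge_atTop x] with z hz
  exact (le_max_left y b).trans (hxy ▸ hf hx (mem_Ici.2 (le_trans hx hz)) hz)

variable [TopologicalSpace α] [OrderTopology α] [TopologicalSpace β] [OrderTopology β]
  [DenselyOrdered β]

theorem StrictMonoOn.continuousOn_of_image_Ici (hf : StrictMonoOn f (Ici a))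
    (himg : f '' Ici a = Ici b) : ContinuousOn f (Ici a) := by
  have hb : ∀ x ∈ Ici a, b ≤ f x := fun x hx => himg.subset (mem_image_of_mem f hx)
  intro x hx
  rcases (mem_Ici.1 hx).eq_or_lt with rfl | hax
  · exact continuousWithinAt_right_of_monotoneOn_of_image_mem_nhdsWithin hf.monotoneOn
      self_mem_nhdsWithin (himg ▸ mem_of_superset self_mem_nhdsWithin (Ici_subset_Ici.2 (hb a hx)))
  · have hbx : b < f x := (hb a self_mem_Ici).trans_lt (hf self_mem_Ici hx hax)
    exact (continuousAt_of_monotoneOn_of_image_mem_nhds hf.monotoneOn (Ici_mem_nhds hax)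
      (himg ▸ Ici_mem_nhds hbx)).continuousWithinAt

end ImageIci

theorem strictMonoOn_div_one_sub_mul (c : ℝ) :
    StrictMonoOn (fun s => s / (1 - c * s)) {s | c * s < 1} := by
  intro s hs t ht hst
  rw [div_lt_div_iff₀ (sub_pos.2 hs) (sub_pos.2 ht)]
  linarith

theorem stmt_1_general (u φ g ginv v ψ : ℝ → ℝ) (c φinf : ℝ)
    (hc0 : 0 < c)
    (hu_cont : ContinuousOn u (Ici 0))
    (hu_antitone : AntitoneOn u (Ici 0))
    (hφ : ∀ x, φ x = x * u x)
    (hφ_mono : StrictMonoOn φ (Ici 0))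
    (hφ_lim : Tendsto φ atTop (nhds φinf))
    (hφinf : φinf < 1 / c)
    (hg : ∀ x, g x = x / (1 - c * φ x))
    (hg_bij : Set.BijOn g (Ici 0) (Ici 0))
    (hginv_left : ∀ x ∈ Ici (0:ℝ), ginv (g x) = x)
    (hginv_right : ∀ x ∈ Ici (0:ℝ), g (ginv x) = x)
    (hginv_maps : ∀ x ∈ Ici (0:ℝ), ginv x ∈ Ici (0:ℝ))
    (hv : ∀ x, v x = u (ginv x))
    (hψ : ∀ x, ψ x = x * v x) :
    ContinuousOn v (Ici 0) ∧ AntitoneOn v (Ici 0) ∧ StrictMonoOn ψ (Ici 0) ∧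
      Tendsto ψ atTop (nhds (φinf / (1 - c * φinf))) := by
  obtain rfl : v = u ∘ ginv := funext hv
  have hcφinf : c * φinf < 1 := by rwa [lt_div_iff₀ hc0, mul_comm] at hφinf
  have hcφ : MapsTo φ (Ici 0) {s | c * s < 1} := fun x hx =>
    (mul_le_mul_of_nonneg_left (hφ_mono.monotoneOn.le_of_tendsto_Ici hφ_lim hx) hc0.le).trans_lt
      hcφinf
  have hg_mono : MonotoneOn g (Ici 0) := fun x hx y hy hxy => by
    rw [hg, hg]
    exact div_le_div₀ (hx.trans hxy) hxy (sub_pos.2 (hcφ hy))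
      (sub_le_sub_left (mul_le_mul_of_nonneg_left (hφ_mono.monotoneOn hx hy hxy) hc0.le) 1)
  have hginv_mono : StrictMonoOn ginv (Ici 0) :=
    RightInvOn.strictMonoOn_of_monotoneOn hginv_right hg_mono hginv_maps
  have hginv_img : ginv '' Ici 0 = Ici 0 := by
    nth_rw 1 [← hg_bij.image_eq]
    exact LeftInvOn.image_image hginv_left
  have hψ_eq : EqOn ψ ((fun s => s / (1 - c * s)) ∘ φ ∘ ginv) (Ici 0) := fun x hx =>
    calc ψ x = g (ginv x) * u (ginv x) := by rw [hψ, hginv_right x hx, Function.comp_apply]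
      _ = φ (ginv x) / (1 - c * φ (ginv x)) := by rw [hg, hφ]; ring
  have hρ_cont : ContinuousAt (fun s => s / (1 - c * s)) φinf :=
    continuousAt_id.div (by fun_prop) (sub_pos.2 hcφinf).ne'
  refine ⟨hu_cont.comp (hginv_mono.continuousOn_of_image_Ici hginv_img) hginv_maps,
    hu_antitone.comp_MonotoneOn hginv_mono.monotoneOn hginv_maps, ?_, ?_⟩
  · exact ((strictMonoOn_div_one_sub_mul c).comp (hφ_mono.comp hginv_mono hginv_maps)
      (hcφ.comp hginv_maps)).congr hψ_eq.symm
  · exact (hρ_cont.tendsto.comp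
      (hφ_lim.comp (hginv_mono.monotoneOn.tendsto_atTop_of_image_Ici hginv_img))).congr'
      (eventuallyEq_of_mem (Ici_mem_atTop 0) hψ_eq.symm)

theorem stmt_1 (u φ g ginv v ψ : ℝ → ℝ) (c φinf : ℝ)
    (hc0 : 0 < c) (hc1 : c < 1)
    (hu_pos : ∀ x ∈ Ici (0:ℝ), 0 < u x)
    (hu_cont : ContinuousOn u (Ici 0))
    (hu_antitone : AntitoneOn u (Ici 0))
    (hφ : ∀ x, φ x = x * u x)
    (hφ_mono : StrictMonoOn φ (Ici 0))
    (hφ_lim : Tendsto φ atTop (nhds φinf))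
    (hφinf : φinf < 1 / c)
    (hg : ∀ x, g x = x / (1 - c * φ x))
    (hg_bij : Set.BijOn g (Ici 0) (Ici 0))
    (hginv_left : ∀ x ∈ Ici (0:ℝ), ginv (g x) = x)
    (hginv_right : ∀ x ∈ Ici (0:ℝ), g (ginv x) = x)
    (hginv_maps : ∀ x ∈ Ici (0:ℝ), ginv x ∈ Ici (0:ℝ))
    (hv : ∀ x, v x = u (ginv x))
    (hψ : ∀ x, ψ x = x * v x) :
    ContinuousOn v (Ici 0) ∧ AntitoneOn v (Ici 0) ∧ StrictMonoOn ψ (Ici 0) ∧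
      Tendsto ψ atTop (nhds (φinf / (1 - c * φinf))) :=
  stmt_1_general u φ g ginv v ψ c φinf hc0 hu_cont hu_antitone hφ hφ_mono hφ_lim hφinf hg hg_bij
    hginv_left hginv_right hginv_maps hv hψ
end

section
/- Let B ∈ ℂ^{N×N} be Hermitian with λ_min(B) ≥ ξ > 0, and write B = (B - (ξ/2)·I) + (ξ/2)·I with B - (ξ/2)·I positive definite. Then for any vector x ∈ ℂ^N and the rank-one update B' = B + v·x·x† with v ≥ 0, one has |tr(B⁻¹) - tr(B'⁻¹)| ≤ 2/ξ. -/
open Matrix ComplexOrder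

/-!
By the Sherman–Morrison formula, with `w = B⁻¹ x` the trace difference equals
`v ‖w‖² / (1 + v x† B⁻¹ x)`. Since `x† B⁻¹ x = w† B w` and `B ≥ ξ I`, the denominator is at least
`1 + v ξ ‖w‖²`, so the difference lies in `[0, 1/ξ]`.
-/

namespace Matrix

section Field

variable {n K : Type*} [Fintype n] [DecidableEq n] [Field K]

theorem inv_add_vecMulVec {A : Matrix n n K} (hA : IsUnit A.det) (x y : n → K)
    (hs : 1 + y ⬝ᵥ A⁻¹ *ᵥ x ≠ 0) :
    (A + vecMulVec x y)⁻¹ =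
      A⁻¹ - (1 + y ⬝ᵥ A⁻¹ *ᵥ x)⁻¹ • vecMulVec (A⁻¹ *ᵥ x) (y ᵥ* A⁻¹) := by
  refine inv_eq_right_inv ?_
  have hAA : A * A⁻¹ = 1 := mul_nonsing_inv A hA
  rw [Matrix.add_mul, Matrix.mul_sub, Matrix.mul_sub, hAA, Matrix.mul_smul, Matrix.mul_smul,
    mul_vecMulVec, mulVec_mulVec, hAA, one_mulVec, vecMulVec_mul, vecMulVec_mul_vecMulVec,
    vecMulVec_smul, smul_smul]
  have h : (1 + y ⬝ᵥ A⁻¹ *ᵥ x)⁻¹ + (1 + y ⬝ᵥ A⁻¹ *ᵥ x)⁻¹ * (y ⬝ᵥ A⁻¹ *ᵥ x) = 1 := by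
    field_simp
  linear_combination (norm := module) -h • vecMulVec x (y ᵥ* A⁻¹)

theorem trace_inv_sub_trace_inv_add_vecMulVec {A : Matrix n n K} (hA : IsUnit A.det)
    (x y : n → K) (hs : 1 + y ⬝ᵥ A⁻¹ *ᵥ x ≠ 0) :
    A⁻¹.trace - (A + vecMulVec x y)⁻¹.trace =
      (y ᵥ* A⁻¹ ⬝ᵥ A⁻¹ *ᵥ x) / (1 + y ⬝ᵥ A⁻¹ *ᵥ x) := by
  rw [inv_add_vecMulVec hA x y hs, trace_sub, trace_smul, trace_vecMulVec, sub_sub_cancel,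
    smul_eq_mul, dotProduct_comm (A⁻¹ *ᵥ x), inv_mul_eq_div]

end Field

section RCLike

variable {n 𝕜 : Type*} [Fintype n] [DecidableEq n] [RCLike 𝕜]

open scoped MatrixOrder in
theorem IsHermitian.posSemidef_sub_smul_one_of_le_eigenvalues {B : Matrix n n 𝕜}
    (hB : B.IsHermitian) {ξ : ℝ} (heig : ∀ i, ξ ≤ hB.eigenvalues i) : (B - ξ • 1).PosSemidef := by
  rw [← Algebra.algebraMap_eq_smul_one, ← le_iff]
  refine (algebraMap_le_iff_le_spectrum hB.isSelfAdjoint).mpr ?_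
  rw [hB.spectrum_real_eq_range_eigenvalues]
  rintro _ ⟨i, rfl⟩
  exact heig i

theorem IsHermitian.mul_dotProduct_star_self_le {B : Matrix n n 𝕜} (hB : B.IsHermitian) {ξ : ℝ}
    (heig : ∀ i, ξ ≤ hB.eigenvalues i) (w : n → 𝕜) :
    ξ * (star w ⬝ᵥ w) ≤ star w ⬝ᵥ B *ᵥ w := by
  have hpsd := (hB.posSemidef_sub_smul_one_of_le_eigenvalues heig).dotProduct_mulVec_nonneg w
  rwa [sub_mulVec, smul_mulVec, one_mulVec, dotProduct_sub, dotProduct_smul, sub_nonneg,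
    RCLike.real_smul_eq_coe_mul] at hpsd

theorem PosDef.trace_inv_sub_trace_inv_add_smul_vecMulVec_star {B : Matrix n n 𝕜}
    (hB : B.PosDef) {v : ℝ} (hv : 0 ≤ v) (x : n → 𝕜) :
    B⁻¹.trace - (B + v • vecMulVec x (star x))⁻¹.trace =
      v * (star (B⁻¹ *ᵥ x) ⬝ᵥ B⁻¹ *ᵥ x) / (1 + v * (star x ⬝ᵥ B⁻¹ *ᵥ x)) := by
  have hden : 1 + (v • star x) ⬝ᵥ B⁻¹ *ᵥ x ≠ 0 := by
    rw [smul_dotProduct, RCLike.real_smul_eq_coe_mul]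
    exact (add_pos_of_pos_of_nonneg one_pos (mul_nonneg (RCLike.ofReal_nonneg.mpr hv)
      (hB.inv.posSemidef.dotProduct_mulVec_nonneg x))).ne'
  rw [← vecMulVec_smul, trace_inv_sub_trace_inv_add_vecMulVec hB.det_pos.ne'.isUnit x _ hden,
    smul_vecMul, star_mulVec, hB.isHermitian.inv.eq, smul_dotProduct, smul_dotProduct,
    RCLike.real_smul_eq_coe_mul, RCLike.real_smul_eq_coe_mul]

end RCLike

end Matrix

theorem mul_div_one_add_mul_le_inv {v s c ξ : ℝ} (hv : 0 ≤ v) (hs : 0 ≤ s) (hξ : 0 < ξ)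
    (hsc : ξ * s ≤ c) : v * s / (1 + v * c) ≤ ξ⁻¹ := by
  have hc : 0 ≤ c := (mul_nonneg hξ.le hs).trans hsc
  rw [div_le_iff₀ (by positivity), inv_mul_eq_div, le_div_iff₀ hξ]
  nlinarith [mul_le_mul_of_nonneg_left hsc hv]

theorem Complex.norm_mul_div_one_add_mul_le_inv {v ξ : ℝ} {s c : ℂ} (hv : 0 ≤ v) (hξ : 0 < ξ)
    (hs : 0 ≤ s) (hsc : ξ * s ≤ c) : ‖v * s / (1 + v * c)‖ ≤ ξ⁻¹ := by
  obtain ⟨s, rfl⟩ : ∃ r : ℝ, s = r := ⟨_, eq_re_of_ofReal_le (r := 0) (by simpa using hs)⟩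
  obtain ⟨c, rfl⟩ : ∃ r : ℝ, c = r := ⟨_, eq_re_of_ofReal_le (r := ξ * s) (by simpa using hsc)⟩
  rw [zero_le_real] at hs
  rw [← ofReal_mul, real_le_real] at hsc
  have hc : 0 ≤ c := (mul_nonneg hξ.le hs).trans hsc
  norm_cast
  rw [Real.norm_eq_abs, abs_of_nonneg (by positivity)]
  exact mul_div_one_add_mul_le_inv hv hs hξ hsc

theorem stmt_19 (N : ℕ) (B : Matrix (Fin N) (Fin N) ℂ) (ξ : ℝ) (x : Fin N → ℂ) (v : ℝ)
    (hB : B.IsHermitian) (hξ : 0 < ξ)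
    (heig : ∀ i, ξ ≤ hB.eigenvalues i)
    (hv : 0 ≤ v) :
    ‖(B⁻¹).trace - ((B + v • vecMulVec x (star x))⁻¹).trace‖ ≤ 2 / ξ := by
  have hBpd : B.PosDef := hB.posDef_iff_eigenvalues_pos.mpr fun i => hξ.trans_le (heig i)
  have hquad : ξ * (star (B⁻¹ *ᵥ x) ⬝ᵥ B⁻¹ *ᵥ x) ≤ star x ⬝ᵥ B⁻¹ *ᵥ x := by
    refine (hB.mul_dotProduct_star_self_le heig (B⁻¹ *ᵥ x)).trans_eq ?_
    rw [mulVec_mulVec, mul_nonsing_inv B hBpd.det_pos.ne'.isUnit, one_mulVec, star_mulVec,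
      hB.inv.eq, dotProduct_mulVec]
  rw [hBpd.trace_inv_sub_trace_inv_add_smul_vecMulVec_star hv x]
  calc _ ≤ ξ⁻¹ :=
        Complex.norm_mul_div_one_add_mul_le_inv hv hξ (dotProduct_star_self_nonneg _) hquad
    _ ≤ 2 / ξ := by rw [inv_eq_one_div]; gcongr; norm_num
end
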